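/- The image of the map φ : ℂ³ × ℂ³ → ℂ⁶ defined by φ((x,y,z),(p,q,r)) = (2xp, 2yq, 2zr, xq+yp, xr+zp, yr+zq) is exactly the zero set {y ∈ ℂ⁶ : d(y₁,…,y₆) = 0} of the cubic d(y₁,…,y₆) = y₁y₂y₃ + 2y₄y₅y₆ − y₁y₆² − y₂y₅² − y₃y₄². -/

import Mathlib

/-!
Read `(a, b, c, d, e, f)` as the quadratic form `Q = aX² + bY² + cZ² + 2dXY + 2eXZ + 2fYZ`, whose
Gram determinant is the cubic. The image of `φ` consists of the forms `2 (xX + yY + zZ)(pX + qY + rZ)`,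
and over an algebraically closed field these are exactly the degenerate forms. If `a ≠ 0`, completing
the square gives `aQ = (aX + dY + eZ)² - R(Y, Z)` with a binary form `R` whose discriminant is `a` times
the cubic; when the cubic vanishes `R = (sY + tZ)²` is a square and `aQ` is a difference of two squares.
Permuting the variables reduces to `a ≠ 0` unless the diagonal vanishes, where `Q = 2(dXY + eXZ + fYZ)`
and `def = 0` makes one of the three terms disappear.
-/

variable {K : Type*}

/-- `(a, b, c, d, e, f)` are the entries of the symmetric matrix `[[a, d, e], [d, b, f], [e, f, c]]`
of the form `u vᵀ + v uᵀ` with `u = (x, y, z)` and `v = (p, q, r)`. -/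
def IsSymProduct [CommRing K] (a b c d e f : K) : Prop :=
  ∃ x y z p q r : K,
    a = 2 * x * p ∧ b = 2 * y * q ∧ c = 2 * z * r ∧
    d = x * q + y * p ∧ e = x * r + z * p ∧ f = y * r + z * q

/-- The determinant of `[[a, d, e], [d, b, f], [e, f, c]]`. -/
def symDet [CommRing K] (a b c d e f : K) : K :=
  a * b * c + 2 * d * e * f - a * f ^ 2 - b * e ^ 2 - c * d ^ 2

section CommRing

variable [CommRing K] {a b c d e f : K}

theorem IsSymProduct.symDet_eq_zero (h : IsSymProduct a b c d e f) : symDet a b c d e f = 0 := by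
  obtain ⟨x, y, z, p, q, r, rfl, rfl, rfl, rfl, rfl, rfl⟩ := h
  unfold symDet
  ring

theorem IsSymProduct.swap_xy (h : IsSymProduct a b c d e f) : IsSymProduct b a c d f e := by
  obtain ⟨x, y, z, p, q, r, rfl, rfl, rfl, rfl, rfl, rfl⟩ := h
  exact ⟨y, x, z, q, p, r, by ring, by ring, by ring, by ring, by ring, by ring⟩

theorem IsSymProduct.swap_xz (h : IsSymProduct a b c d e f) : IsSymProduct c b a f e d := by
  obtain ⟨x, y, z, p, q, r, rfl, rfl, rfl, rfl, rfl, rfl⟩ := h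
  exact ⟨z, y, x, r, q, p, by ring, by ring, by ring, by ring, by ring, by ring⟩

theorem symDet_swap_xy : symDet b a c d f e = symDet a b c d e f := by
  unfold symDet
  ring

theorem symDet_swap_xz : symDet c b a f e d = symDet a b c d e f := by
  unfold symDet
  ring

theorem isSymProduct_zero_zero_zero [NoZeroDivisors K] (h : d * e * f = 0) :
    IsSymProduct 0 0 0 d e f := by
  rcases mul_eq_zero.mp h with hde | rfl
  · rcases mul_eq_zero.mp hde with rfl | rfl
    · exact ⟨0, 0, 1, e, f, 0, by ring, by ring, by ring, by ring, by ring, by ring⟩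
    · exact ⟨0, 1, 0, d, 0, f, by ring, by ring, by ring, by ring, by ring, by ring⟩
  · exact ⟨1, 0, 0, 0, d, e, by ring, by ring, by ring, by ring, by ring, by ring⟩

end CommRing

section IsAlgClosed

variable [Field K] [IsAlgClosed K]

theorem exists_sq_eq_sq_eq_mul_eq_of_sq_eq_mul {A B C : K} (h : B ^ 2 = A * C) :
    ∃ s t : K, s ^ 2 = A ∧ t ^ 2 = C ∧ s * t = B := by
  obtain ⟨s, hs⟩ := IsAlgClosed.exists_pow_nat_eq A two_pos
  obtain ⟨t, ht⟩ := IsAlgClosed.exists_pow_nat_eq C two_pos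
  have hst : (s * t) ^ 2 = B ^ 2 := by rw [mul_pow, hs, ht, h]
  rcases sq_eq_sq_iff_eq_or_eq_neg.mp hst with hB | hB
  · exact ⟨s, t, hs, ht, hB⟩
  · exact ⟨s, -t, hs, by rw [neg_sq, ht], by rw [mul_neg, hB, neg_neg]⟩

theorem isSymProduct_of_symDet_eq_zero_of_ne_zero {a b c d e f : K} (h2 : (2 : K) ≠ 0)
    (ha : a ≠ 0) (hdet : symDet a b c d e f = 0) : IsSymProduct a b c d e f := by
  have hdisc : (d * e - a * f) ^ 2 = (d ^ 2 - a * b) * (e ^ 2 - a * c) := by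
    unfold symDet at hdet
    linear_combination (-a) * hdet
  obtain ⟨s, t, hs, ht, hst⟩ := exists_sq_eq_sq_eq_mul_eq_of_sq_eq_mul hdisc
  -- `aQ = (aX + (d + s)Y + (e + t)Z) (aX + (d - s)Y + (e - t)Z)`
  refine ⟨1, (d + s) / a, (e + t) / a, a / 2, (d - s) / 2, (e - t) / 2, ?_, ?_, ?_, ?_, ?_, ?_⟩ <;>
    field_simp
  · linear_combination hs
  · linear_combination ht
  · ring
  · ring
  · linear_combination 2 * hst

theorem isSymProduct_iff_symDet_eq_zero (h2 : (2 : K) ≠ 0) {a b c d e f : K} :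
    IsSymProduct a b c d e f ↔ symDet a b c d e f = 0 := by
  refine ⟨IsSymProduct.symDet_eq_zero, fun hdet => ?_⟩
  by_cases ha : a = 0
  swap
  · exact isSymProduct_of_symDet_eq_zero_of_ne_zero h2 ha hdet
  by_cases hb : b = 0
  swap
  · rw [← symDet_swap_xy] at hdet
    exact (isSymProduct_of_symDet_eq_zero_of_ne_zero h2 hb hdet).swap_xy
  by_cases hc : c = 0
  swap
  · rw [← symDet_swap_xz] at hdet
    exact (isSymProduct_of_symDet_eq_zero_of_ne_zero h2 hc hdet).swap_xz
  subst ha hb hc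
  refine isSymProduct_zero_zero_zero ((mul_eq_zero.mp ?_).resolve_left h2)
  unfold symDet at hdet
  linear_combination hdet

end IsAlgClosed

theorem image_of_phi_is_cubic (w : Fin 6 → ℂ) :
    (∃ x y z p q r : ℂ,
      w 0 = 2 * x * p ∧
      w 1 = 2 * y * q ∧
      w 2 = 2 * z * r ∧
      w 3 = x * q + y * p ∧
      w 4 = x * r + z * p ∧
      w 5 = y * r + z * q) ↔
    w 0 * w 1 * w 2 + 2 * w 3 * w 4 * w 5
      - w 0 * w 5 ^ 2 - w 1 * w 4 ^ 2 - w 2 * w 3 ^ 2 = 0 :=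
  isSymProduct_iff_symDet_eq_zero two_ne_zero
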